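/- arXiv:2605.03679 — 3 statements merged into one kernel-verified Lean document; each statement's English description precedes it below -/
import Mathlib

section
/- For every real p > 1 and every θ with 0 < θ < π/(2p), one has (1/p) tan(pθ) > sin θ / (cos(pθ))^{1/p}. -/
/-!
Put `q = 1/p` and `u = pθ ∈ (0, π/2)`; the inequality becomes `sin (q u) < q sin u cos^{q-1} u`.
Both sides vanish at `u = 0`, and the derivative of their difference is `q` times
`B(u) = cos^{q-2} u (1 - q sin² u) - cos (q u)`, which again vanishes at `0`. Finally
`B'(u) = sin u · cos^{q-3} u (2 - 3q + q² sin² u) + q sin (q u)` is positive: concavity of `sin`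
gives `q sin (q u) ≥ q² sin u`, and Bernoulli's inequality for `cos^{3-q} u = (1 - sin² u)^{(3-q)/2}`
gives `cos^{q-3} u (2 - 3q + q² sin² u) > -q²`.
-/

open Real Set

lemma lt_of_hasDerivAt_pos {f f' : ℝ → ℝ} {a b : ℝ} (hab : a < b)
    (hf : ∀ x ∈ Icc a b, HasDerivAt f (f' x) x) (hf' : ∀ x ∈ Ioo a b, 0 < f' x) : f a < f b := by
  obtain ⟨c, hc, hslope⟩ := exists_hasDerivAt_eq_slope f f' hab
    (fun x hx => (hf x hx).continuousAt.continuousWithinAt)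
    (fun x hx => hf x (Ioo_subset_Icc_self hx))
  have := hf' c hc
  rwa [hslope, div_pos_iff_of_pos_right (sub_pos.2 hab), sub_pos] at this

lemma mul_sin_le_sin_mul {q v : ℝ} (hq₀ : 0 ≤ q) (hq₁ : q ≤ 1) (hv₀ : 0 ≤ v) (hv₁ : v ≤ π) :
    q * sin v ≤ sin (q * v) := by
  simpa using strictConcaveOn_sin_Icc.concaveOn.2 ⟨le_rfl, pi_pos.le⟩ ⟨hv₀, hv₁⟩
    (sub_nonneg.2 hq₁) hq₀ (sub_add_cancel 1 q)

lemma neg_sq_lt_rpow_mul {q c : ℝ} (hq₀ : 0 < q) (hq₁ : q < 1) (hc₀ : 0 < c) :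
    -q ^ 2 < c ^ (q - 3) * (2 - 3 * q + q ^ 2 * (1 - c ^ 2)) := by
  have bernoulli : 1 - (3 - q) / 2 * (1 - c ^ 2) ≤ c ^ (3 - q) := by
    have h := one_add_mul_self_le_rpow_one_add (s := c ^ 2 - 1) (p := (3 - q) / 2)
      (by nlinarith) (by linarith)
    have hpow : (c ^ 2) ^ ((3 - q) / 2) = c ^ (3 - q) := by
      rw [← rpow_natCast, ← rpow_mul hc₀.le]; norm_num; ring_nf
    rw [add_sub_cancel, hpow] at h
    linarith
  have hinv : c ^ (q - 3) * c ^ (3 - q) = 1 := by rw [← rpow_add hc₀]; simp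
  have hsum : 0 < 2 - 3 * q + q ^ 2 * (1 - c ^ 2) + q ^ 2 * c ^ (3 - q) := by
    have hq2 : q ^ 2 * (1 - c ^ 2) < 1 := by nlinarith
    nlinarith [mul_le_mul_of_nonneg_left bernoulli (sq_nonneg q),
      mul_pos (sub_pos.2 hq₁) (by linarith : 0 < 2 - q - q ^ 2 * (1 - c ^ 2) / 2)]
  nlinarith [mul_pos (rpow_pos_of_pos hc₀ (q - 3)) hsum]

section
variable {q : ℝ}

lemma hasDerivAt_cos_rpow_mul_sub_cos_mul {v : ℝ} (hv : cos v ≠ 0) :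
    HasDerivAt (fun w => cos w ^ (q - 2) * (1 - q * sin w ^ 2) - cos (q * w))
      (sin v * (cos v ^ (q - 3) * (2 - 3 * q + q ^ 2 * (1 - cos v ^ 2))) + q * sin (q * v)) v := by
  have hpow := (hasDerivAt_cos v).rpow_const (p := q - 2) (Or.inl hv)
  have hfac := (((hasDerivAt_sin v).pow 2).const_mul q).const_sub 1
  have hcos := (hasDerivAt_cos (q * v)).comp v ((hasDerivAt_id v).const_mul q)
  refine ((hpow.mul hfac).sub hcos).congr_deriv ?_
  rw [show q - 2 - 1 = q - 3 by ring, show q - 2 = q - 3 + 1 by ring, rpow_add_one hv]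
  simp only [Pi.pow_apply, mul_one, Nat.cast_ofNat]
  linear_combination (q ^ 2 - 2 * q) * sin v * cos v ^ (q - 3) * sin_sq_add_cos_sq v

lemma hasDerivAt_mul_sin_mul_cos_rpow_sub_sin_mul {v : ℝ} (hv : cos v ≠ 0) :
    HasDerivAt (fun w => q * sin w * cos w ^ (q - 1) - sin (q * w))
      (q * (cos v ^ (q - 2) * (1 - q * sin v ^ 2) - cos (q * v))) v := by
  have hpow := (hasDerivAt_cos v).rpow_const (p := q - 1) (Or.inl hv)
  have hsin := (hasDerivAt_sin (q * v)).comp v ((hasDerivAt_id v).const_mul q)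
  refine ((((hasDerivAt_sin v).const_mul q).mul hpow).sub hsin).congr_deriv ?_
  rw [show q - 1 - 1 = q - 2 by ring, show q - 1 = q - 2 + 1 by ring, rpow_add_one hv]
  simp only [mul_one]
  linear_combination q * cos v ^ (q - 2) * sin_sq_add_cos_sq v

lemma cos_mul_lt_cos_rpow_mul (hq₀ : 0 < q) (hq₁ : q < 1) {u : ℝ} (hu₀ : 0 < u)
    (hu₁ : u < π / 2) : cos (q * u) < cos u ^ (q - 2) * (1 - q * sin u ^ 2) := by
  have key := lt_of_hasDerivAt_pos hu₀
    (fun v hv => hasDerivAt_cos_rpow_mul_sub_cos_mul (q := q)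
      (cos_pos_of_mem_Ioo ⟨by linarith [pi_pos, hv.1], by linarith [hv.2]⟩).ne')
    (fun v ⟨hv₀, hvu⟩ => by
      have hsin : 0 < sin v := sin_pos_of_pos_of_lt_pi hv₀ (by linarith [pi_pos])
      have hcos : 0 < cos v := cos_pos_of_mem_Ioo ⟨by linarith [pi_pos], by linarith⟩
      have hconc := mul_sin_le_sin_mul hq₀.le hq₁.le hv₀.le (by linarith [pi_pos])
      nlinarith [mul_lt_mul_of_pos_left (neg_sq_lt_rpow_mul hq₀ hq₁ hcos) hsin])
  simp only [mul_zero, cos_zero, one_rpow, sin_zero] at key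
  linarith

lemma sin_mul_lt_mul_sin_mul_cos_rpow (hq₀ : 0 < q) (hq₁ : q < 1) {u : ℝ} (hu₀ : 0 < u)
    (hu₁ : u < π / 2) : sin (q * u) < q * sin u * cos u ^ (q - 1) := by
  have key := lt_of_hasDerivAt_pos hu₀
    (fun v hv => hasDerivAt_mul_sin_mul_cos_rpow_sub_sin_mul (q := q)
      (cos_pos_of_mem_Ioo ⟨by linarith [pi_pos, hv.1], by linarith [hv.2]⟩).ne')
    (fun v ⟨hv₀, hvu⟩ => mul_pos hq₀ <| sub_pos.2 <| cos_mul_lt_cos_rpow_mul hq₀ hq₁ hv₀ <|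
      hvu.trans hu₁)
  simp only [mul_zero, sin_zero, zero_mul, sub_zero] at key
  linarith

end

/-- **A trigonometric inequality.**  For `p > 1` and `0 < θ < π/(2p)`,
`(1/p) tan(pθ) > sin θ / (cos(pθ))^{1/p}`. -/
theorem trig_inequality (p θ : ℝ) (hp : 1 < p) (hθ₀ : 0 < θ) (hθ₁ : θ < π / (2 * p)) :
    Real.sin θ / (Real.cos (p * θ)) ^ (1 / p) < Real.tan (p * θ) / p := by
  have hp₀ : 0 < p := one_pos.trans hp
  have hu₀ : 0 < p * θ := mul_pos hp₀ hθ₀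
  have hu₁ : p * θ < π / 2 := by
    rw [lt_div_iff₀ (by positivity)] at hθ₁
    rw [lt_div_iff₀ two_pos]
    linarith
  have hcos : 0 < cos (p * θ) := cos_pos_of_mem_Ioo ⟨by linarith [pi_pos], hu₁⟩
  have key := sin_mul_lt_mul_sin_mul_cos_rpow (one_div_pos.2 hp₀) ((div_lt_one hp₀).2 hp) hu₀ hu₁
  rw [show 1 / p * (p * θ) = θ by field_simp] at key
  calc sin θ / cos (p * θ) ^ (1 / p)
      < 1 / p * sin (p * θ) * cos (p * θ) ^ (1 / p - 1) / cos (p * θ) ^ (1 / p) :=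
        div_lt_div_of_pos_right key (rpow_pos_of_pos hcos _)
    _ = tan (p * θ) / p := by
        rw [rpow_sub_one hcos.ne', tan_eq_sin_div_cos]
        field_simp
end

section
/- Let p, q > 1 with 1/p + 1/q = 1, let a, b > 0, and let 0 < α < (1/2)(b/a)^{1/q}. Then there exists θ ∈ (0, π/(2p)) such that a/2 < (2α)^{−1} (tan(pθ))/p − (qb/2)^{−p/q} (sin θ)^p / (p cos(pθ)). -/
/-!
Put `K = (2α)⁻¹`, `C = (qb/2)^(-p/q)` and `F(θ) = K tan(pθ)/p - C sin^p θ / (p cos(pθ))`.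
The concave function `θ ↦ Kθ - Cθ^p/p` peaks at `t = K^(q-1) qb/2`, where `C t^(p-1) = K`,
with value `Kt/q = K^q b/2 > a/2`; the last inequality is the hypothesis on `α`.

If `t < π/(2p)`: the difference `F(θ) - (Kθ - Cθ^p/p)` vanishes at `0` and has derivative
`(K - C sin^(p-1) θ cos((p-1)θ)) / cos²(pθ) - (K - Cθ^(p-1)) ≥ 0` on `(0, t)`, so
`F(t) > a/2`. Otherwise `C sin^p(π/(2p)) < C (π/(2p))^(p-1) ≤ K`, so in
`F = (K sin(pθ) - C sin^p θ)/(p cos(pθ))` the numerator stays positive while the denominator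
tends to `0⁺` as `θ → π/(2p)⁻`, and `F → ∞`.
-/

open Real Filter Topology Set

noncomputable def angleObjective (p K C θ : ℝ) : ℝ :=
  K * tan (p * θ) / p - C * sin θ ^ p / (p * cos (p * θ))

lemma angleObjective_eq (p K C θ : ℝ) :
    angleObjective p K C θ = (K * sin (p * θ) - C * sin θ ^ p) / (p * cos (p * θ)) := by
  rw [angleObjective, tan_eq_sin_div_cos]
  ring

lemma continuousAt_angleObjective {p K C θ : ℝ} (hp : 0 < p) (hcos : cos (p * θ) ≠ 0) :
    ContinuousAt (angleObjective p K C) θ := by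
  have hsin : ContinuousAt (fun x => sin x ^ p) θ :=
    continuous_sin.continuousAt.rpow_const (Or.inr hp.le)
  rw [funext (angleObjective_eq p K C)]
  exact ((continuousAt_const.mul (by fun_prop)).sub (continuousAt_const.mul hsin)).div
    (by fun_prop) (mul_ne_zero hp.ne' hcos)

lemma hasDerivAt_angleObjective {p K C θ : ℝ} (hp : p ≠ 0) (hsin : 0 < sin θ)
    (hcos : cos (p * θ) ≠ 0) :
    HasDerivAt (angleObjective p K C)
      ((K - C * sin θ ^ (p - 1) * cos ((p - 1) * θ)) / cos (p * θ) ^ 2) θ := by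
  have hpx : HasDerivAt (fun x => p * x) p θ := by
    simpa using (hasDerivAt_id θ).const_mul p
  have htan := ((hasDerivAt_tan hcos).comp θ hpx).const_mul K |>.div_const p
  have hsinp := ((hasDerivAt_rpow_const (p := p) (Or.inl hsin.ne')).comp θ
    (hasDerivAt_sin θ)).const_mul C
  have hcosp := ((hasDerivAt_cos (p * θ)).comp θ hpx).const_mul p
  refine (htan.sub (hsinp.div hcosp (mul_ne_zero hp hcos))).congr_deriv ?_
  have hsin_rpow : sin θ ^ p = sin θ ^ (p - 1) * sin θ := by
    rw [← rpow_add_one hsin.ne']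
    norm_num
  simp only [Function.comp_def]
  rw [show (p - 1) * θ = p * θ - θ by ring, cos_sub, hsin_rpow]
  field_simp
  ring

lemma sub_rpow_le_deriv_angleObjective {p K C x : ℝ} (hp : 1 ≤ p) (hC : 0 ≤ C) (hx : 0 < x)
    (hxπ : x ≤ π) (hcos : cos (p * x) ≠ 0) (hCx : C * x ^ (p - 1) ≤ K) :
    K - C * x ^ (p - 1) ≤ (K - C * sin x ^ (p - 1) * cos ((p - 1) * x)) / cos (p * x) ^ 2 := by
  have hsin : 0 ≤ sin x := sin_nonneg_of_nonneg_of_le_pi hx.le hxπ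
  have hsin_rpow : C * sin x ^ (p - 1) ≤ C * x ^ (p - 1) :=
    mul_le_mul_of_nonneg_left (rpow_le_rpow hsin (sin_le hx.le) (by linarith)) hC
  have hnum : K - C * x ^ (p - 1) ≤ K - C * sin x ^ (p - 1) * cos ((p - 1) * x) := by
    have := mul_le_mul_of_nonneg_left (cos_le_one ((p - 1) * x))
      (mul_nonneg hC (rpow_nonneg hsin (p - 1)))
    linarith
  rw [le_div_iff₀ (by positivity)]
  nlinarith [cos_sq_le_one (p * x)]

lemma hasDerivAt_mul_sub_mul_rpow_div {p : ℝ} (K C : ℝ) (hp : 1 ≤ p) (x : ℝ) :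
    HasDerivAt (fun y => K * y - C * y ^ p / p) (K - C * x ^ (p - 1)) x := by
  have hlin : HasDerivAt (fun y => K * y) K x := by
    simpa using (hasDerivAt_id x).const_mul K
  refine (hlin.sub (((hasDerivAt_rpow_const (Or.inr hp)).const_mul C).div_const p)).congr_deriv ?_
  field_simp

lemma sub_rpow_div_le_angleObjective {p K C t : ℝ} (hp : 1 ≤ p) (hC : 0 ≤ C) (ht : 0 ≤ t)
    (hpt : p * t < π / 2) (hCt : C * t ^ (p - 1) ≤ K) :
    K * t - C * t ^ p / p ≤ angleObjective p K C t := by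
  have hp0 : 0 < p := by linarith
  have hlt : ∀ x ∈ Icc 0 t, p * x < π / 2 := fun x hx =>
    (mul_le_mul_of_nonneg_left hx.2 hp0.le).trans_lt hpt
  have hcos : ∀ x ∈ Icc 0 t, cos (p * x) ≠ 0 := fun x hx =>
    (cos_pos_of_mem_Ioo ⟨by nlinarith [pi_pos, hx.1], hlt x hx⟩).ne'
  have hπ : ∀ x ∈ Icc 0 t, x < π := fun x hx => by nlinarith [pi_pos, hlt x hx, hx.1]
  have hmono : MonotoneOn (fun x => angleObjective p K C x - (K * x - C * x ^ p / p))
      (Icc 0 t) := by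
    refine monotoneOn_of_hasDerivWithinAt_nonneg (convex_Icc 0 t)
      (f' := fun x => (K - C * sin x ^ (p - 1) * cos ((p - 1) * x)) / cos (p * x) ^ 2
        - (K - C * x ^ (p - 1))) (fun x hx => ?_) (fun x hx => ?_) (fun x hx => ?_)
    · exact ((continuousAt_angleObjective hp0 (hcos x hx)).sub
        (hasDerivAt_mul_sub_mul_rpow_div K C hp x).continuousAt).continuousWithinAt
    · rw [interior_Icc] at hx
      have hx' := Ioo_subset_Icc_self hx
      have hsin : 0 < sin x := sin_pos_of_pos_of_lt_pi hx.1 (hπ x hx')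
      exact ((hasDerivAt_angleObjective hp0.ne' hsin (hcos x hx')).sub
        (hasDerivAt_mul_sub_mul_rpow_div K C hp x)).hasDerivWithinAt
    · rw [interior_Icc] at hx
      have hx' := Ioo_subset_Icc_self hx
      have hCx : C * x ^ (p - 1) ≤ K :=
        (mul_le_mul_of_nonneg_left (rpow_le_rpow hx.1.le hx.2.le (by linarith)) hC).trans hCt
      exact sub_nonneg.2 (sub_rpow_le_deriv_angleObjective hp hC hx.1 (hπ x hx').le
        (hcos x hx') hCx)
  simpa [angleObjective, zero_rpow hp0.ne'] using hmono ⟨le_rfl, ht⟩ ⟨ht, le_rfl⟩ ht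

lemma sin_rpow_lt_rpow_sub_one {p x : ℝ} (hp : 1 < p) (hx : 0 < x) (hxπ : x ≤ π) :
    sin x ^ p < x ^ (p - 1) := by
  have hsin : 0 ≤ sin x := sin_nonneg_of_nonneg_of_le_pi hx.le hxπ
  calc sin x ^ p ≤ sin x ^ (p - 1) :=
        rpow_le_rpow_of_exponent_ge' hsin (sin_le_one x) (by linarith) (by linarith)
    _ < x ^ (p - 1) := rpow_lt_rpow hsin (sin_lt hx) (by linarith)

lemma tendsto_angleObjective_atTop {p K C : ℝ} (hp : 0 < p)
    (hK : C * sin (π / (2 * p)) ^ p < K) :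
    Tendsto (angleObjective p K C) (𝓝[<] (π / (2 * p))) atTop := by
  set θ₀ := π / (2 * p)
  have hθ₀ : 0 < θ₀ := by positivity
  have hpθ₀ : p * θ₀ = π / 2 := by simp only [θ₀]; field_simp
  have hnum : Tendsto (fun θ => K * sin (p * θ) - C * sin θ ^ p) (𝓝[<] θ₀)
      (𝓝 (K - C * sin θ₀ ^ p)) := by
    have hsin : ContinuousAt (fun θ => sin θ ^ p) θ₀ :=
      continuous_sin.continuousAt.rpow_const (Or.inr hp.le)
    have : ContinuousAt (fun θ => K * sin (p * θ) - C * sin θ ^ p) θ₀ :=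
      (continuousAt_const.mul (by fun_prop)).sub (continuousAt_const.mul hsin)
    simpa [hpθ₀] using this.tendsto.mono_left nhdsWithin_le_nhds
  have hden : Tendsto (fun θ => p * cos (p * θ)) (𝓝[<] θ₀) (𝓝[>] 0) := by
    refine tendsto_nhdsWithin_iff.2 ⟨?_, ?_⟩
    · have : ContinuousAt (fun θ => p * cos (p * θ)) θ₀ := by fun_prop
      simpa [hpθ₀] using this.tendsto.mono_left nhdsWithin_le_nhds
    · filter_upwards [Ioo_mem_nhdsLT hθ₀] with θ hθ
      exact mul_pos hp (cos_pos_of_mem_Ioo ⟨by nlinarith [pi_pos, hθ.1], by nlinarith [hθ.2]⟩)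
  rw [funext (angleObjective_eq p K C)]
  simpa only [div_eq_mul_inv, Function.comp_def] using
    hnum.pos_mul_atTop (by linarith) (tendsto_inv_nhdsGT_zero.comp hden)

lemma Real.HolderConjugate.rpow_neg_div_mul_rpow_sub_one {p q K c : ℝ}
    (h : p.HolderConjugate q) (hK : 0 < K) (hc : 0 < c) :
    c ^ (-(p / q)) * (K ^ (q - 1) * c) ^ (p - 1) = K := by
  have hpq : (q - 1) * (p - 1) = 1 := by linear_combination h.mul_eq_add
  rw [mul_rpow (by positivity) hc.le, ← rpow_mul hK.le, hpq, rpow_one, h.div_conj_eq_sub_one,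
    rpow_neg hc.le]
  field_simp

lemma Real.HolderConjugate.mul_sub_mul_rpow_div_eq {p q K C t : ℝ} (h : p.HolderConjugate q)
    (ht : 0 < t) (hCt : C * t ^ (p - 1) = K) :
    K * t - C * t ^ p / p = K * t / q := by
  have hCtp : C * t ^ p = K * t := by
    rw [← hCt, rpow_sub_one ht.ne']
    field_simp
  rw [hCtp]
  linear_combination -(K * t) * h.inv_add_inv_eq_one

lemma lt_inv_rpow_mul_of_lt_rpow_one_div {a b x q : ℝ} (ha : 0 < a) (hb : 0 ≤ b) (hx : 0 < x)
    (hq : 0 < q) (h : x < (b / a) ^ (1 / q)) : a < x⁻¹ ^ q * b := by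
  rw [one_div, lt_rpow_inv_iff_of_pos hx.le (by positivity) hq, lt_div_iff₀ ha] at h
  rw [inv_rpow hx.le, inv_mul_eq_div, lt_div_iff₀ (by positivity)]
  linarith

theorem good_angle_exists_general
    (p q a b α : ℝ) (hp : 1 < p) (hpq : 1 / p + 1 / q = 1)
    (ha : 0 < a) (hb : 0 < b)
    (hα₀ : 0 < α) (hα₁ : α < 1 / 2 * (b / a) ^ (1 / q)) :
    ∃ θ : ℝ, 0 < θ ∧ θ < π / (2 * p) ∧
      a / 2 < (2 * α)⁻¹ * Real.tan (p * θ) / p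
        - (q * b / 2) ^ (-(p / q)) * (Real.sin θ) ^ p / (p * Real.cos (p * θ)) := by
  have hconj : p.HolderConjugate q :=
    holderConjugate_iff.2 ⟨hp, by simpa only [one_div] using hpq⟩
  have hq : 0 < q := hconj.symm.pos
  set K := (2 * α)⁻¹
  set C := (q * b / 2) ^ (-(p / q))
  have hK : 0 < K := by positivity
  have hC : 0 < C := by positivity
  set t := K ^ (q - 1) * (q * b / 2)
  have ht : 0 < t := by positivity
  have hCt : C * t ^ (p - 1) = K := hconj.rpow_neg_div_mul_rpow_sub_one hK (by positivity)
  have hgain : a / 2 < K * t - C * t ^ p / p := by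
    have hKt : K * t / q = K ^ q * b / 2 := by
      simp only [t]
      rw [rpow_sub_one hK.ne']
      field_simp
    rw [hconj.mul_sub_mul_rpow_div_eq ht hCt, hKt]
    have hα : a < K ^ q * b :=
      lt_inv_rpow_mul_of_lt_rpow_one_div ha hb.le (x := 2 * α) (by positivity) hq (by linarith)
    linarith
  rcases lt_or_ge t (π / (2 * p)) with htθ | hθt
  · have hpt : p * t < π / 2 := by
      linarith [(lt_div_iff₀' (by positivity : (0 : ℝ) < 2 * p)).1 htθ]
    exact ⟨t, ht, htθ,
      hgain.trans_le (sub_rpow_div_le_angleObjective hp.le hC.le ht.le hpt hCt.le)⟩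
  · have hθ₀ : 0 < π / (2 * p) := by positivity
    have hsin : C * sin (π / (2 * p)) ^ p < K := calc
      C * sin (π / (2 * p)) ^ p < C * (π / (2 * p)) ^ (p - 1) := by
        gcongr
        exact sin_rpow_lt_rpow_sub_one hp hθ₀ (div_le_self pi_pos.le (by linarith))
      _ ≤ C * t ^ (p - 1) := by gcongr
      _ = K := hCt
    obtain ⟨θ, hθ, hθ_mem⟩ :=
      ((tendsto_angleObjective_atTop (by linarith) hsin).eventually_gt_atTop (a / 2)).and
        (Ioo_mem_nhdsLT hθ₀) |>.exists
    exact ⟨θ, hθ_mem.1, hθ_mem.2, hθ⟩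

/-- **Existence of a good angle.**  For Hölder conjugate `p, q > 1`, `a, b > 0`, and
`0 < α < (1/2)(b/a)^{1/q}`, there exists `θ ∈ (0, π/(2p))` with
`a/2 < (2α)⁻¹ tan(pθ)/p - (qb/2)^{-p/q} (sin θ)^p / (p cos(pθ))`. -/
theorem good_angle_exists
    (p q a b α : ℝ) (hp : 1 < p) (hq : 1 < q) (hpq : 1 / p + 1 / q = 1)
    (ha : 0 < a) (hb : 0 < b)
    (hα₀ : 0 < α) (hα₁ : α < 1 / 2 * (b / a) ^ (1 / q)) :
    ∃ θ : ℝ, 0 < θ ∧ θ < π / (2 * p) ∧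
      a / 2 < (2 * α)⁻¹ * Real.tan (p * θ) / p
        - (q * b / 2) ^ (-(p / q)) * (Real.sin θ) ^ p / (p * Real.cos (p * θ)) :=
  good_angle_exists_general p q a b α hp hpq ha hb hα₀ hα₁
end

section
/- Let T ⊂ (0,∞), let h > 0 and R₀ > 0 be such that every interval [u, u+h] with u ≥ R₀ contains a point of T, and let L > 0 and M ∈ ℕ with h < L/M. Then there exists a subset T' ⊂ T such that: (1) T' is uniformly discrete with inf_{s≠t ∈ T'} |s − t| ≥ L/M − h, and (2) there exists n₀ ∈ ℕ such that for every n ≥ n₀ the interval [nL, (n+1)L) contains exactly M points of T'. -/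
open Set

/-!
Put `δ = L / M`. For every large `j`, pick a point `g j ∈ T ∩ [jδ, jδ + h]`. Since `h < δ`,
`g j` lies in the grid cell `[jδ, (j+1)δ)`, so distinct choices are at least `δ - h` apart and
the interval `[nL, (n+1)L) = [nMδ, (n+1)Mδ)` contains exactly the `M` points `g j` with
`nM ≤ j < (n+1)M`.
-/

section GridSelection

variable {δ h x y : ℝ}

theorem le_sub_of_mem_Icc_nat_mul {j k : ℕ} (hδ : 0 ≤ δ)
    (hx : x ∈ Icc (j * δ) (j * δ + h)) (hy : y ∈ Icc (k * δ) (k * δ + h)) (hjk : j < k) :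
    δ - h ≤ y - x := by
  have hjk' : (j : ℝ) + 1 ≤ k := by exact_mod_cast hjk
  nlinarith [hx.2, hy.1]

theorem le_abs_sub_of_mem_Icc_nat_mul {j k : ℕ} (hδ : 0 ≤ δ)
    (hx : x ∈ Icc (j * δ) (j * δ + h)) (hy : y ∈ Icc (k * δ) (k * δ + h)) (hjk : j ≠ k) :
    δ - h ≤ |x - y| := by
  rcases hjk.lt_or_gt with hlt | hlt
  · rw [abs_sub_comm]
    exact (le_sub_of_mem_Icc_nat_mul hδ hx hy hlt).trans (le_abs_self _)
  · exact (le_sub_of_mem_Icc_nat_mul hδ hy hx hlt).trans (le_abs_self _)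

theorem mem_Ico_nat_mul_iff {j a b : ℕ} (hδ : 0 < δ)
    (hx : x ∈ Ico (j * δ) ((j + 1) * δ)) :
    x ∈ Ico (a * δ) (b * δ) ↔ j ∈ Ico a b := by
  constructor
  · rintro ⟨ha, hb⟩
    have haj : (a : ℝ) < j + 1 := lt_of_mul_lt_mul_right (ha.trans_lt hx.2) hδ.le
    have hjb : (j : ℝ) < b := lt_of_mul_lt_mul_right (hx.1.trans_lt hb) hδ.le
    have haj' : a < j + 1 := by exact_mod_cast haj
    exact ⟨Nat.lt_succ_iff.mp haj', by exact_mod_cast hjb⟩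
  · rintro ⟨ha, hb⟩
    have ha' : (a : ℝ) ≤ j := by exact_mod_cast ha
    have hb' : (j : ℝ) + 1 ≤ b := by exact_mod_cast hb
    exact ⟨(mul_le_mul_of_nonneg_right ha' hδ.le).trans hx.1,
      hx.2.trans_le (mul_le_mul_of_nonneg_right hb' hδ.le)⟩

theorem exists_separated_subset_ncard_inter_Ico {T : Set ℝ} (hδ : 0 < δ) (hhδ : h < δ) (j₀ : ℕ)
    (hfill : ∀ j : ℕ, j₀ ≤ j → ∃ t ∈ T, t ∈ Icc (j * δ) (j * δ + h)) :
    ∃ T' ⊆ T, (∀ s ∈ T', ∀ t ∈ T', s ≠ t → δ - h ≤ |s - t|) ∧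
      ∀ a b : ℕ, j₀ ≤ a → (T' ∩ Ico (a * δ) (b * δ)).ncard = b - a := by
  choose! g hgT hg using hfill
  have hg_cell : ∀ j, j₀ ≤ j → g j ∈ Ico (j * δ) ((j + 1) * δ) := fun j hj =>
    ⟨(hg j hj).1, (hg j hj).2.trans_lt (by linarith)⟩
  have hg_inj : InjOn g (Ici j₀) := by
    intro j hj k hk hjk
    by_contra hne
    have := le_abs_sub_of_mem_Icc_nat_mul hδ.le (hg j hj) (hg k hk) hne
    rw [hjk, sub_self, abs_zero] at this
    linarith
  refine ⟨g '' Ici j₀, image_subset_iff.mpr hgT, ?_, fun a b ha => ?_⟩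
  · rintro _ ⟨j, hj, rfl⟩ _ ⟨k, hk, rfl⟩ hne
    exact le_abs_sub_of_mem_Icc_nat_mul hδ.le (hg j hj) (hg k hk) (ne_of_apply_ne g hne)
  have hwindow : g '' Ici j₀ ∩ Ico (a * δ) (b * δ) = g '' Ico a b := by
    ext x
    constructor
    · rintro ⟨⟨j, hj, rfl⟩, hx⟩
      exact ⟨j, (mem_Ico_nat_mul_iff hδ (hg_cell j hj)).mp hx, rfl⟩
    · rintro ⟨j, hj, rfl⟩
      have hj₀ : j₀ ≤ j := ha.trans hj.1
      exact ⟨⟨j, hj₀, rfl⟩, (mem_Ico_nat_mul_iff hδ (hg_cell j hj₀)).mpr hj⟩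
  rw [hwindow, (hg_inj.mono fun j hj => ha.trans hj.1).ncard_image,
    ← Finset.coe_Ico, ncard_coe_finset, Nat.card_Ico]

end GridSelection

theorem select_regular_subsequence_general
    (T : Set ℝ)
    (h R₀ : ℝ)
    (hfill : ∀ u : ℝ, R₀ ≤ u → ∃ t ∈ T, t ∈ Set.Icc u (u + h))
    (L : ℝ) (hL : 0 < L) (M : ℕ) (hMh : h < L / M) :
    ∃ T' : Set ℝ, T' ⊆ T ∧
      (∀ s ∈ T', ∀ t ∈ T', s ≠ t → L / M - h ≤ |s - t|) ∧
      ∃ n₀ : ℕ, ∀ n : ℕ, n₀ ≤ n →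
        (T' ∩ Set.Ico ((n : ℝ) * L) (((n : ℝ) + 1) * L)).ncard = M := by
  rcases M.eq_zero_or_pos with rfl | hM
  · exact ⟨∅, empty_subset T, by simp, 0, by simp⟩
  have hML : (M : ℝ) * (L / M) = L := mul_div_cancel₀ L (by positivity)
  obtain ⟨n₀, hn₀⟩ := exists_nat_ge (R₀ / L)
  have hR₀L : R₀ ≤ n₀ * L := (div_le_iff₀ hL).mp hn₀
  have hgrid : ∀ j : ℕ, n₀ * M ≤ j → ∃ t ∈ T, t ∈ Icc (j * (L / M)) (j * (L / M) + h) := by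
    intro j hj
    refine hfill _ (hR₀L.trans ?_)
    have hj' : ((n₀ * M : ℕ) : ℝ) ≤ j := by exact_mod_cast hj
    calc (n₀ : ℝ) * L = ((n₀ * M : ℕ) : ℝ) * (L / M) := by push_cast; rw [mul_assoc, hML]
      _ ≤ j * (L / M) := by gcongr
  obtain ⟨T', hT'T, hsep, hcount⟩ :=
    exists_separated_subset_ncard_inter_Ico (by positivity) hMh (n₀ * M) hgrid
  refine ⟨T', hT'T, hsep, n₀, fun n hn => ?_⟩
  have hcount := hcount (n * M) (n * M + M) (Nat.mul_le_mul_right M hn)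
  push_cast at hcount
  rwa [mul_assoc, hML, add_mul, mul_assoc, hML, ← add_one_mul, Nat.add_sub_cancel_left] at hcount

/-- **Selecting a regular uniformly discrete subsequence.**  If every interval `[u, u+h]` with
`u ≥ R₀` contains a point of `T ⊂ (0,∞)`, and `h < L/M`, then there is a subset `T' ⊆ T`
which is uniformly discrete with separation at least `L/M - h` and which has exactly `M`
points in each interval `[nL, (n+1)L)` for all sufficiently large `n`. -/
theorem select_regular_subsequence
    (T : Set ℝ) (hT : T ⊆ Set.Ioi 0)
    (h R₀ : ℝ) (hh : 0 < h) (hR₀ : 0 < R₀)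
    (hfill : ∀ u : ℝ, R₀ ≤ u → ∃ t ∈ T, t ∈ Set.Icc u (u + h))
    (L : ℝ) (hL : 0 < L) (M : ℕ) (hMh : h < L / M) :
    ∃ T' : Set ℝ, T' ⊆ T ∧
      (∀ s ∈ T', ∀ t ∈ T', s ≠ t → L / M - h ≤ |s - t|) ∧
      ∃ n₀ : ℕ, ∀ n : ℕ, n₀ ≤ n →
        (T' ∩ Set.Ico ((n : ℝ) * L) (((n : ℝ) + 1) * L)).ncard = M :=
  select_regular_subsequence_general T h R₀ hfill L hL M hMh
end
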